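/- Stability estimate for the dG(0) scheme (Theorem 4.1, case l = 0): There exists a constant C depending only on γ and ρ such that for every partition, every u_0, v_0 ∈ H, and all Bochner-integrable data f_1, f_2, the dG(0) approximation satisfies ‖A^{1/2} U_{1,N}‖ + ‖U_{2,N}‖ ≤ C ( ‖A^{1/2} u_0‖ + ‖v_0‖ + ∫_0^T ( ‖A^{1/2} f_1(t)‖ + ‖f_2(t)‖ ) dt ). -/

import Mathlib

open MeasureTheory Finset
open scoped RealInnerProductSpace

/-- The time step `k_n = t_n − t_{n-1}`. -/
noncomputable def kstep (tp : ℕ → ℝ) (n : ℕ) : ℝ := tp n - tp (n - 1)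

/-- The quadrature weights
`ω_{n,j} = ∫_{I_n} ∫_{t_{j-1}}^{min(t_j, t)} β(t − s) ds dt` for `1 ≤ j ≤ n ≤ N`. -/
noncomputable def qweight (β : ℝ → ℝ) (tp : ℕ → ℝ) (n j : ℕ) : ℝ :=
  ∫ t in (tp (n - 1))..(tp n), ∫ s in (tp (j - 1))..(min (tp j) t), β (t - s)

/-- The interval averages of the data, `f̄_n = (1/k_n) ∫_{I_n} f(t) dt`. -/
noncomputable def iavg {H : Type*} [NormedAddCommGroup H] [NormedSpace ℝ H]
    (tp : ℕ → ℝ) (f : ℝ → H) (n : ℕ) : H :=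
  (kstep tp n)⁻¹ • ∫ t in (tp (n - 1))..(tp n), f t

/-!
Put `θ_{n,j} = ω_{n,j} / k_n` and `B(x) = ∫_0^x β`. Substituting `u = t − s` gives
`θ_{n,j} = ⨍_{I_n} (B(t − t_{j−1}) − B(t − t_j)) dt`, so, as `β ≥ 0` is nonincreasing with
`∫ β = γ < 1`, the weights are nonnegative, their row sums `⨍_{I_n} B` are at most `γ` and
nondecreasing in `n`, and each column `n ↦ θ_{n,j}` is nonincreasing (`t ↦ B(t − c) − B(t − c')`
is nonincreasing).

Testing the second equation with `U_{2,n}` and replacing `k_n U_{2,n}` by means of the first one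
(`A^{1/2}` is self-adjoint with square `A`) gives, after polarization, that the energy
`ρ‖U_{2,n}‖² + (1 − Σ_j θ_{n,j}) ‖A^{1/2}U_{1,n}‖² + Σ_j θ_{n,j} ‖A^{1/2}(U_{1,j} − U_{1,n})‖²`
grows in one step by at most twice the data terms: the three properties of the weights are exactly
what gives the remaining terms a sign. Bounding the data terms by the maximum `P` of
`‖A^{1/2}U_{1,m}‖ + ‖U_{2,m}‖` and summing yields `min(ρ, 1 − γ) P² ≤ 2 E_0 + 8 P D`, a quadratic
inequality that bounds `P` linearly by the initial data and by
`D = Σ_n (‖A^{1/2} ∫_{I_n} f_1‖ + ‖∫_{I_n} f_2‖) ≤ ∫_0^T (‖A^{1/2} f_1‖ + ‖f_2‖)`.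
-/

section InnerProduct

variable {H : Type*} [NormedAddCommGroup H] [InnerProductSpace ℝ H]

theorem two_mul_inner_sub_eq (x y z : H) :
    2 * ⟪z, x - y⟫ = ‖z - y‖ ^ 2 - ‖z - x‖ ^ 2 + ‖x‖ ^ 2 - ‖y‖ ^ 2 := by
  rw [norm_sub_sq_real, norm_sub_sq_real, inner_sub_right]
  ring

theorem two_mul_inner_sub_sum_smul {ι : Type*} (s : Finset ι) (w : ι → ℝ) (z : ι → H)
    (x y : H) :
    2 * ⟪x - ∑ i ∈ s, w i • z i, x - y⟫
      = (1 - ∑ i ∈ s, w i) * (‖x‖ ^ 2 - ‖y‖ ^ 2) + ‖x - y‖ ^ 2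
        - ∑ i ∈ s, w i * (‖z i - y‖ ^ 2 - ‖z i - x‖ ^ 2) := by
  have hterms : 2 * ∑ i ∈ s, w i * ⟪z i, x - y⟫
      = ∑ i ∈ s, w i * (‖z i - y‖ ^ 2 - ‖z i - x‖ ^ 2) + (∑ i ∈ s, w i) * (‖x‖ ^ 2 - ‖y‖ ^ 2) := by
    rw [Finset.mul_sum, Finset.sum_mul, ← Finset.sum_add_distrib]
    refine Finset.sum_congr rfl fun i _ => ?_
    rw [mul_left_comm, two_mul_inner_sub_eq]
    ring
  have hx := two_mul_inner_sub_eq x y x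
  rw [sub_self, norm_zero] at hx
  rw [inner_sub_left, sum_inner]
  simp only [real_inner_smul_left]
  linear_combination hx - hterms

theorem norm_sub_sum_smul_le {ι : Type*} {s : Finset ι} {w : ι → ℝ} {z : ι → H} {x : H} {P : ℝ}
    (hw : ∀ i ∈ s, 0 ≤ w i) (hw1 : ∑ i ∈ s, w i ≤ 1) (hx : ‖x‖ ≤ P)
    (hz : ∀ i ∈ s, ‖z i‖ ≤ P) :
    ‖x - ∑ i ∈ s, w i • z i‖ ≤ 2 * P := by
  have hP : 0 ≤ P := (norm_nonneg x).trans hx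
  calc ‖x - ∑ i ∈ s, w i • z i‖ ≤ ‖x‖ + ∑ i ∈ s, ‖w i • z i‖ :=
        (norm_sub_le _ _).trans (add_le_add_right (norm_sum_le _ _) _)
    _ ≤ P + ∑ i ∈ s, w i * P := by
        gcongr with i hi
        rw [norm_smul, Real.norm_of_nonneg (hw i hi)]
        exact mul_le_mul_of_nonneg_left (hz i hi) (hw i hi)
    _ ≤ 2 * P := by
        rw [← Finset.sum_mul]
        nlinarith

end InnerProduct

theorem le_div_add_sqrt_of_mul_sq_le {c b E P : ℝ} (hc : 0 < c) (hb : 0 ≤ b)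
    (h : c * P ^ 2 ≤ E + b * P) : P ≤ b / c + √(E / c) := by
  by_contra! hlt
  have hgap : √(E / c) < P - b / c := by linarith
  have hbP : b / c ≤ P := by linarith [Real.sqrt_nonneg (E / c)]
  have hE : E < c * (P - b / c) ^ 2 := by
    rw [← div_lt_iff₀' hc]
    exact (Real.sqrt_lt' (by linarith [Real.sqrt_nonneg (E / c)])).1 hgap
  have hexp : c * (P - b / c) ^ 2 = c * P ^ 2 - b * P - b * (P - b / c) := by
    field_simp
  nlinarith [mul_nonneg hb (sub_nonneg.2 hbP)]

noncomputable def stabilityConstant (ρ γ : ℝ) : ℝ :=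
  8 / min ρ (1 - γ) + √(2 * max ρ 1 / min ρ (1 - γ))

theorem stabilityConstant_pos {ρ γ : ℝ} (hρ : 0 < ρ) (hγ : γ < 1) : 0 < stabilityConstant ρ γ :=
  add_pos_of_pos_of_nonneg (div_pos (by norm_num) (lt_min hρ (by linarith))) (Real.sqrt_nonneg _)

theorem le_stabilityConstant_mul {ρ γ P E D e : ℝ} (hρ : 0 < ρ) (hγ : γ < 1) (hD : 0 ≤ D)
    (he : 0 ≤ e) (hE : E ≤ max ρ 1 * e ^ 2) (h : min ρ (1 - γ) * P ^ 2 ≤ 2 * E + 8 * D * P) :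
    P ≤ stabilityConstant ρ γ * (e + D) := by
  set c := min ρ (1 - γ)
  set M := max ρ 1
  have hc : 0 < c := lt_min hρ (by linarith)
  have hsqrt : √(2 * E / c) ≤ √(2 * M / c) * e := by
    calc √(2 * E / c) ≤ √(2 * M / c * e ^ 2) := by
          rw [div_mul_eq_mul_div]
          exact Real.sqrt_le_sqrt (div_le_div_of_nonneg_right (by linarith) hc.le)
      _ = √(2 * M / c) * e := by
          rw [Real.sqrt_mul (by positivity), Real.sqrt_sq he]
  have hP := le_div_add_sqrt_of_mul_sq_le hc (by positivity) h
  have he' : 0 ≤ 8 / c * e := by positivity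
  have hD' : 0 ≤ √(2 * M / c) * D := by positivity
  calc P ≤ 8 / c * D + √(2 * M / c) * e := by rw [div_mul_eq_mul_div]; linarith
    _ ≤ stabilityConstant ρ γ * (e + D) := by unfold stabilityConstant; nlinarith

section IntervalAverage

variable {f : ℝ → ℝ} {a b c C : ℝ}

theorem intervalAverage_le_of_forall_le (hab : a < b) (hf : IntervalIntegrable f volume a b)
    (h : ∀ x ∈ Set.Icc a b, f x ≤ C) : ⨍ x in a..b, f x ≤ C := by
  rw [interval_average_eq_div, div_le_iff₀ (sub_pos.2 hab)]
  calc ∫ x in a..b, f x ≤ ∫ _ in a..b, C :=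
        intervalIntegral.integral_mono_on hab.le hf intervalIntegrable_const h
    _ = C * (b - a) := by simp [mul_comm]

theorem le_intervalAverage_of_forall_le (hab : a < b) (hf : IntervalIntegrable f volume a b)
    (h : ∀ x ∈ Set.Icc a b, C ≤ f x) : C ≤ ⨍ x in a..b, f x := by
  rw [interval_average_eq_div, le_div_iff₀ (sub_pos.2 hab)]
  calc C * (b - a) = ∫ _ in a..b, C := by simp [mul_comm]
    _ ≤ ∫ x in a..b, f x := intervalIntegral.integral_mono_on hab.le intervalIntegrable_const hf h

theorem MonotoneOn.intervalAverage_le_intervalAverage (hf : MonotoneOn f (Set.Icc a c))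
    (hab : a < b) (hbc : b < c) : ⨍ x in a..b, f x ≤ ⨍ x in b..c, f x := by
  have hl : Set.Icc a b ⊆ Set.Icc a c := Set.Icc_subset_Icc_right hbc.le
  have hr : Set.Icc b c ⊆ Set.Icc a c := Set.Icc_subset_Icc_left hab.le
  have hb : b ∈ Set.Icc a c := ⟨hab.le, hbc.le⟩
  refine (intervalAverage_le_of_forall_le hab ?_ fun x hx => hf (hl hx) hb hx.2).trans
    (le_intervalAverage_of_forall_le hbc ?_ fun x hx => hf hb (hr hx) hx.1)
  · exact (hf.mono (by rwa [Set.uIcc_of_le hab.le])).intervalIntegrable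
  · exact (hf.mono (by rwa [Set.uIcc_of_le hbc.le])).intervalIntegrable

theorem AntitoneOn.intervalAverage_le_intervalAverage (hf : AntitoneOn f (Set.Icc a c))
    (hab : a < b) (hbc : b < c) : ⨍ x in b..c, f x ≤ ⨍ x in a..b, f x := by
  have hl : Set.Icc a b ⊆ Set.Icc a c := Set.Icc_subset_Icc_right hbc.le
  have hr : Set.Icc b c ⊆ Set.Icc a c := Set.Icc_subset_Icc_left hab.le
  have hb : b ∈ Set.Icc a c := ⟨hab.le, hbc.le⟩
  refine (intervalAverage_le_of_forall_le hbc ?_ fun x hx => hf hb (hr hx) hx.1).trans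
    (le_intervalAverage_of_forall_le hab ?_ fun x hx => hf (hl hx) hb hx.2)
  · exact (hf.mono (by rwa [Set.uIcc_of_le hbc.le])).intervalIntegrable
  · exact (hf.mono (by rwa [Set.uIcc_of_le hab.le])).intervalIntegrable

end IntervalAverage

theorem StrictMonoOn.Iic_apply_le {α β : Type*} [PartialOrder α] [Preorder β] {f : α → β}
    {N i j : α} (hf : StrictMonoOn f (Set.Iic N)) (hij : i ≤ j) (hj : j ≤ N) : f i ≤ f j :=
  hf.monotoneOn (hij.trans hj) hj hij

theorem StrictMonoOn.Iic_apply_lt {α β : Type*} [PartialOrder α] [Preorder β] {f : α → β}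
    {N i j : α} (hf : StrictMonoOn f (Set.Iic N)) (hij : i < j) (hj : j ≤ N) : f i < f j :=
  hf (hij.le.trans hj) hj hij

theorem Finset.sum_Icc_pred_sub {M : Type*} [AddCommGroup M] (h : ℕ → M) (n : ℕ) :
    ∑ j ∈ Icc 1 n, (h (j - 1) - h j) = h 0 - h n := by
  induction n with
  | zero => simp
  | succ n ih => rw [Finset.sum_Icc_succ_top (by omega), ih, Nat.add_sub_cancel]; abel

structure AdmissibleWeights (N : ℕ) (γ : ℝ) (θ : ℕ → ℕ → ℝ) : Prop where
  nonneg : ∀ n j, 1 ≤ j → j ≤ n → n ≤ N → 0 ≤ θ n j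
  sum_le : ∀ n ≤ N, ∑ j ∈ Icc 1 n, θ n j ≤ γ
  sum_le_sum_succ : ∀ n < N, ∑ j ∈ Icc 1 n, θ n j ≤ ∑ j ∈ Icc 1 (n + 1), θ (n + 1) j
  succ_le : ∀ n j, 1 ≤ j → j < n → n < N → θ (n + 1) j ≤ θ n j

section Energy

variable {H : Type*} [NormedAddCommGroup H]

def memoryEnergy (ρ : ℝ) (θ : ℕ → ℕ → ℝ) (a b : ℕ → H) (m : ℕ) : ℝ :=
  ρ * ‖b m‖ ^ 2 + (1 - ∑ j ∈ Icc 1 m, θ m j) * ‖a m‖ ^ 2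
    + ∑ j ∈ Icc 1 m, θ m j * ‖a j - a m‖ ^ 2

variable {N : ℕ} {γ ρ : ℝ} {θ : ℕ → ℕ → ℝ}

theorem AdmissibleWeights.sum_memory_succ_le (hw : AdmissibleWeights N γ θ) {n : ℕ} (hn : n < N)
    (a : ℕ → H) :
    ∑ j ∈ Icc 1 n, θ (n + 1) j * ‖a j - a n‖ ^ 2 ≤ ∑ j ∈ Icc 1 n, θ n j * ‖a j - a n‖ ^ 2 := by
  refine Finset.sum_le_sum fun j hj => ?_
  obtain ⟨hj1, hjn⟩ := Finset.mem_Icc.1 hj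
  rcases hjn.lt_or_eq with hjn | rfl
  · exact mul_le_mul_of_nonneg_right (hw.succ_le n j hj1 hjn hn) (sq_nonneg _)
  · simp

theorem min_mul_sq_le_two_mul_memoryEnergy (hw : AdmissibleWeights N γ θ) (hγ : γ < 1)
    (hρ : 0 ≤ ρ) (a b : ℕ → H) {m : ℕ} (hm : m ≤ N) :
    min ρ (1 - γ) * (‖a m‖ + ‖b m‖) ^ 2 ≤ 2 * memoryEnergy ρ θ a b m := by
  have hmem : 0 ≤ ∑ j ∈ Icc 1 m, θ m j * ‖a j - a m‖ ^ 2 :=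
    Finset.sum_nonneg fun j hj => mul_nonneg
      (hw.nonneg m j (Finset.mem_Icc.1 hj).1 (Finset.mem_Icc.1 hj).2 hm) (sq_nonneg _)
  have hG := mul_le_mul_of_nonneg_right (hw.sum_le m hm) (sq_nonneg ‖a m‖)
  have hρ' := mul_le_mul_of_nonneg_right (min_le_left ρ (1 - γ)) (sq_nonneg ‖b m‖)
  have hγ' := mul_le_mul_of_nonneg_right (min_le_right ρ (1 - γ)) (sq_nonneg ‖a m‖)
  have hc := mul_nonneg (le_min hρ (by linarith : (0 : ℝ) ≤ 1 - γ)) (sq_nonneg (‖a m‖ - ‖b m‖))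
  unfold memoryEnergy
  nlinarith

theorem memoryEnergy_zero_le (θ : ℕ → ℕ → ℝ) (a b : ℕ → H) :
    memoryEnergy ρ θ a b 0 ≤ max ρ 1 * (‖a 0‖ + ‖b 0‖) ^ 2 := by
  simp only [memoryEnergy, Finset.Icc_eq_empty_of_lt zero_lt_one, Finset.sum_empty]
  have hb := mul_le_mul_of_nonneg_right (le_max_left ρ 1) (sq_nonneg ‖b 0‖)
  have ha := mul_le_mul_of_nonneg_right (le_max_right ρ 1) (sq_nonneg ‖a 0‖)
  have hab : 0 ≤ max ρ 1 * (‖a 0‖ * ‖b 0‖) :=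
    mul_nonneg (zero_le_one.trans (le_max_right ρ 1)) (by positivity)
  nlinarith

variable [InnerProductSpace ℝ H]

def memoryCorrected (θ : ℕ → ℕ → ℝ) (a : ℕ → H) (n : ℕ) : H :=
  a n - ∑ j ∈ Icc 1 n, θ n j • a j

theorem memoryEnergy_succ_le (hw : AdmissibleWeights N γ θ) (hγ : γ < 1) (hρ : 0 ≤ ρ)
    {a b : ℕ → H} {n : ℕ} (hn : n < N) {R : ℝ}
    (hid : ρ * ⟪b (n + 1) - b n, b (n + 1)⟫
      + ⟪memoryCorrected θ a (n + 1), a (n + 1) - a n⟫ = R) :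
    memoryEnergy ρ θ a b (n + 1) ≤ memoryEnergy ρ θ a b n + 2 * R := by
  set G := ∑ j ∈ Icc 1 (n + 1), θ (n + 1) j
  have hpol_a := two_mul_inner_sub_sum_smul (Icc 1 (n + 1)) (θ (n + 1)) a (a (n + 1)) (a n)
  have hpol_b := two_mul_inner_sub_eq (b (n + 1)) (b n) (b (n + 1))
  rw [sub_self, norm_zero, real_inner_comm] at hpol_b
  have hsplit : ∑ j ∈ Icc 1 (n + 1), θ (n + 1) j * (‖a j - a n‖ ^ 2 - ‖a j - a (n + 1)‖ ^ 2)
      = ∑ j ∈ Icc 1 n, θ (n + 1) j * ‖a j - a n‖ ^ 2 + θ (n + 1) (n + 1) * ‖a (n + 1) - a n‖ ^ 2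
        - ∑ j ∈ Icc 1 (n + 1), θ (n + 1) j * ‖a j - a (n + 1)‖ ^ 2 := by
    rw [← Finset.sum_Icc_succ_top (by omega), ← Finset.sum_sub_distrib]
    simp only [mul_sub]
  have hmem := hw.sum_memory_succ_le hn a
  have hGmono := hw.sum_le_sum_succ n hn
  have hGγ := hw.sum_le (n + 1) hn
  have hdiag : θ (n + 1) (n + 1) ≤ G :=
    Finset.single_le_sum (fun j hj => hw.nonneg _ j (Finset.mem_Icc.1 hj).1
      (Finset.mem_Icc.1 hj).2 hn) (Finset.mem_Icc.2 ⟨by omega, le_rfl⟩)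
  have hold := mul_le_mul_of_nonneg_right hGmono (sq_nonneg ‖a n‖)
  have hjump := mul_nonneg (by linarith : 0 ≤ 1 - θ (n + 1) (n + 1)) (sq_nonneg ‖a (n + 1) - a n‖)
  have hdamp := mul_nonneg hρ (sq_nonneg ‖b (n + 1) - b n‖)
  have hpol_b' := congrArg (ρ * ·) hpol_b
  unfold memoryEnergy
  unfold memoryCorrected at hid
  linarith

theorem memoryEnergy_le (hw : AdmissibleWeights N γ θ) (hγ : γ < 1) (hρ : 0 ≤ ρ)
    {a b : ℕ → H} {R : ℕ → ℝ}
    (hid : ∀ n, 1 ≤ n → n ≤ N → ρ * ⟪b n - b (n - 1), b n⟫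
      + ⟪memoryCorrected θ a n, a n - a (n - 1)⟫ = R n) :
    ∀ m ≤ N, memoryEnergy ρ θ a b m ≤ memoryEnergy ρ θ a b 0 + 2 * ∑ n ∈ Icc 1 m, R n := by
  intro m
  induction m with
  | zero => intro; simp
  | succ m ih =>
    intro hm
    have hstep := memoryEnergy_succ_le hw hγ hρ hm (hid (m + 1) (by omega) hm)
    rw [Finset.sum_Icc_succ_top (by omega)]
    linarith [ih (by omega)]

theorem inner_add_inner_memoryCorrected_le (hw : AdmissibleWeights N γ θ) (hγ : γ < 1)
    {a b : ℕ → H} {P : ℝ} (hP : ∀ j ≤ N, ‖a j‖ + ‖b j‖ ≤ P) {n : ℕ} (hn : n ≤ N) (f g : H) :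
    ⟪f, b n⟫ + ⟪memoryCorrected θ a n, g⟫ ≤ 2 * P * (‖g‖ + ‖f‖) := by
  have ha : ∀ j ≤ N, ‖a j‖ ≤ P := fun j hj => by linarith [hP j hj, norm_nonneg (b j)]
  have hb : ‖b n‖ ≤ P := by linarith [hP n hn, norm_nonneg (a n)]
  have hr : ‖memoryCorrected θ a n‖ ≤ 2 * P :=
    norm_sub_sum_smul_le (fun j hj => hw.nonneg n j (Finset.mem_Icc.1 hj).1
        (Finset.mem_Icc.1 hj).2 hn) ((hw.sum_le n hn).trans hγ.le) (ha n hn)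
      fun j hj => ha j ((Finset.mem_Icc.1 hj).2.trans hn)
  have h1 := (real_inner_le_norm f (b n)).trans (mul_le_mul_of_nonneg_left hb (norm_nonneg f))
  have h2 := (real_inner_le_norm (memoryCorrected θ a n) g).trans
    (mul_le_mul_of_nonneg_right hr (norm_nonneg g))
  nlinarith [norm_nonneg f, (norm_nonneg (b n)).trans hb]

theorem norm_add_norm_le_of_energy_identity (hρ : 0 < ρ) (hγ : γ < 1)
    (hw : AdmissibleWeights N γ θ) {a b g f : ℕ → H}
    (hid : ∀ n, 1 ≤ n → n ≤ N → ρ * ⟪b n - b (n - 1), b n⟫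
      + ⟪memoryCorrected θ a n, a n - a (n - 1)⟫
        = ⟪f n, b n⟫ + ⟪memoryCorrected θ a n, g n⟫) :
    ‖a N‖ + ‖b N‖
      ≤ stabilityConstant ρ γ * (‖a 0‖ + ‖b 0‖ + ∑ n ∈ Icc 1 N, (‖g n‖ + ‖f n‖)) := by
  obtain ⟨m, hm, hmax⟩ := (range (N + 1)).exists_max_image (fun j => ‖a j‖ + ‖b j‖) ⟨0, by simp⟩
  have hmN : m ≤ N := Nat.lt_succ_iff.1 (Finset.mem_range.1 hm)
  have hP : ∀ j ≤ N, ‖a j‖ + ‖b j‖ ≤ ‖a m‖ + ‖b m‖ :=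
    fun j hj => hmax j (Finset.mem_range.2 (Nat.lt_succ_of_le hj))
  have hdata : ∑ n ∈ Icc 1 m, (⟪f n, b n⟫ + ⟪memoryCorrected θ a n, g n⟫)
      ≤ 2 * (‖a m‖ + ‖b m‖) * ∑ n ∈ Icc 1 N, (‖g n‖ + ‖f n‖) := by
    rw [Finset.mul_sum]
    calc _ ≤ ∑ n ∈ Icc 1 m, 2 * (‖a m‖ + ‖b m‖) * (‖g n‖ + ‖f n‖) :=
          Finset.sum_le_sum fun n hn => inner_add_inner_memoryCorrected_le hw hγ hP
            ((Finset.mem_Icc.1 hn).2.trans hmN) (f n) (g n)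
      _ ≤ _ := Finset.sum_le_sum_of_subset_of_nonneg (Finset.Icc_subset_Icc_right hmN)
          fun n _ _ => by positivity
  refine (hP N le_rfl).trans (le_stabilityConstant_mul hρ hγ (by positivity) (by positivity)
    (memoryEnergy_zero_le θ a b) ?_)
  linarith [min_mul_sq_le_two_mul_memoryEnergy hw hγ hρ.le a b hmN,
    memoryEnergy_le hw hγ hρ.le hid m hmN]

end Energy

section Scheme

variable {H : Type*} [NormedAddCommGroup H] [InnerProductSpace ℝ H] {A S : H →L[ℝ] H}

theorem inner_identity_of_step (hS : ∀ x y : H, ⟪S x, y⟫ = ⟪x, S y⟫)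
    (hSS : ∀ x : H, S (S x) = A x) {ρ k : ℝ} {x x' u u' z g f : H}
    (h1 : x - x' = k • u + g) (h2 : ρ • (u - u') + k • A z = f) :
    ρ * ⟪u - u', u⟫ + ⟪S z, S x - S x'⟫ = ⟪f, u⟫ + ⟪S z, S g⟫ := by
  have hpair : ρ * ⟪u - u', u⟫ + k * ⟪S z, S u⟫ = ⟪f, u⟫ := by
    rw [← h2, inner_add_left, real_inner_smul_left, real_inner_smul_left, ← hSS z, hS (S z) u]
  have hx : S x - S x' = k • S u + S g := by rw [← map_sub, h1, map_add, map_smul]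
  rw [hx, inner_add_right, real_inner_smul_right]
  linarith

theorem energy_identity_of_dG0_step (hS : ∀ x y : H, ⟪S x, y⟫ = ⟪x, S y⟫)
    (hSS : ∀ x : H, S (S x) = A x) {ρ k : ℝ} {θ : ℕ → ℕ → ℝ} {ω : ℕ → ℝ} {U1 U2 : ℕ → H}
    {F1 F2 : H} {n : ℕ} (hn : 1 ≤ n) (hω : ∀ j ∈ Icc 1 n, ω j = k * θ n j)
    (h1 : U1 n - U1 (n - 1) = k • U2 n + F1)
    (h2 : ρ • (U2 n - U2 (n - 1)) + (k - ω n) • A (U1 n)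
      - ∑ j ∈ Ico 1 n, ω j • A (U1 j) = F2) :
    ρ * ⟪U2 n - U2 (n - 1), U2 n⟫
      + ⟪memoryCorrected θ (fun j => S (U1 j)) n, S (U1 n) - S (U1 (n - 1))⟫
        = ⟪F2, U2 n⟫ + ⟪memoryCorrected θ (fun j => S (U1 j)) n, S F1⟫ := by
  have h2' : ρ • (U2 n - U2 (n - 1)) + k • A (U1 n - ∑ j ∈ Icc 1 n, θ n j • U1 j) = F2 := by
    have hsplit : ∑ j ∈ Icc 1 n, θ n j • U1 j = ∑ j ∈ Ico 1 n, θ n j • U1 j + θ n n • U1 n := by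
      rw [← Finset.Ico_add_one_right_eq_Icc, Finset.sum_Ico_succ_top hn]
    have hmem : ∑ j ∈ Ico 1 n, ω j • A (U1 j) = k • ∑ j ∈ Ico 1 n, θ n j • A (U1 j) := by
      rw [Finset.smul_sum]
      exact Finset.sum_congr rfl fun j hj => by
        rw [hω j (Finset.Ico_subset_Icc_self hj), mul_smul]
    rw [← h2, hmem, hω n (Finset.mem_Icc.2 ⟨hn, le_rfl⟩), hsplit]
    simp only [map_sub, map_add, map_sum, map_smul]
    module
  have hSz : S (U1 n - ∑ j ∈ Icc 1 n, θ n j • U1 j) = memoryCorrected θ (fun j => S (U1 j)) n := by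
    simp [memoryCorrected, map_sum]
  rw [← hSz]
  exact inner_identity_of_step hS hSS h1 h2'

end Scheme

section Kernel

variable {β : ℝ → ℝ}

noncomputable def kernelPrimitive (β : ℝ → ℝ) (x : ℝ) : ℝ := ∫ u in Set.Ioc 0 x, β u

theorem kernelPrimitive_of_nonpos {x : ℝ} (hx : x ≤ 0) : kernelPrimitive β x = 0 := by
  rw [kernelPrimitive, Set.Ioc_eq_empty (not_lt.2 hx), Measure.restrict_empty,
    integral_zero_measure]

theorem monotone_kernelPrimitive (hβ : IntegrableOn β (Set.Ioi 0))
    (hβ0 : ∀ s ∈ Set.Ioi (0 : ℝ), 0 ≤ β s) : Monotone (kernelPrimitive β) := fun _ _ hxy =>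
  setIntegral_mono_set (hβ.mono_set Set.Ioc_subset_Ioi_self)
    ((ae_restrict_iff' measurableSet_Ioc).2 (Filter.Eventually.of_forall fun u hu => hβ0 u hu.1))
    (Set.Ioc_subset_Ioc_right hxy).eventuallyLE

theorem kernelPrimitive_le (hβ : IntegrableOn β (Set.Ioi 0))
    (hβ0 : ∀ s ∈ Set.Ioi (0 : ℝ), 0 ≤ β s) (x : ℝ) :
    kernelPrimitive β x ≤ ∫ s in Set.Ioi 0, β s :=
  setIntegral_mono_set hβ ((ae_restrict_iff' measurableSet_Ioi).2 (Filter.Eventually.of_forall hβ0))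
    Set.Ioc_subset_Ioi_self.eventuallyLE

theorem MeasureTheory.IntegrableOn.intervalIntegrable_of_nonneg (hβ : IntegrableOn β (Set.Ioi 0))
    {x y : ℝ} (hx : 0 ≤ x) (hy : 0 ≤ y) : IntervalIntegrable β volume x y :=
  intervalIntegrable_iff.2 (hβ.mono_set fun _ hu => (le_min hx hy).trans_lt hu.1)

theorem kernelPrimitive_sub (hβ : IntegrableOn β (Set.Ioi 0)) {x y : ℝ} (hx : 0 ≤ x)
    (hxy : x ≤ y) : kernelPrimitive β y - kernelPrimitive β x = ∫ u in x..y, β u := by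
  rw [intervalIntegral.integral_of_le hxy, kernelPrimitive, kernelPrimitive,
    ← Set.Ioc_union_Ioc_eq_Ioc hx hxy, setIntegral_union (Set.Ioc_disjoint_Ioc_of_le le_rfl)
      measurableSet_Ioc (hβ.mono_set Set.Ioc_subset_Ioi_self)
      (hβ.mono_set fun u hu => hx.trans_lt hu.1)]
  ring

theorem integral_kernel_eq (hβ : IntegrableOn β (Set.Ioi 0)) {c c' t : ℝ} (hcc' : c ≤ c')
    (hct : c ≤ t) :
    ∫ s in c..min c' t, β (t - s) = kernelPrimitive β (t - c) - kernelPrimitive β (t - c') := by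
  rw [intervalIntegral.integral_comp_sub_left (fun u => β u) t]
  rcases le_total c' t with h | h
  · rw [min_eq_left h, kernelPrimitive_sub hβ (by linarith) (by linarith)]
  · rw [min_eq_right h, sub_self, kernelPrimitive_of_nonpos (sub_nonpos.2 h),
      ← kernelPrimitive_sub hβ le_rfl (by linarith), kernelPrimitive_of_nonpos le_rfl]

theorem antitoneOn_kernelPrimitive_sub (hβ : IntegrableOn β (Set.Ioi 0))
    (hβanti : AntitoneOn β (Set.Ioi 0)) {c c' : ℝ} (hcc' : c ≤ c') :
    AntitoneOn (fun t => kernelPrimitive β (t - c) - kernelPrimitive β (t - c')) (Set.Ici c') := by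
  intro t ht t' ht' htt'
  simp only [Set.mem_Ici] at ht ht'
  dsimp only
  rw [kernelPrimitive_sub hβ (sub_nonneg.2 ht) (by linarith),
    kernelPrimitive_sub hβ (sub_nonneg.2 ht') (by linarith)]
  have hshift : ∫ u in t' - c'..t' - c, β u = ∫ u in t - c'..t - c, β (u + (t' - t)) := by
    rw [intervalIntegral.integral_comp_add_right]
    ring_nf
  rw [hshift]
  refine intervalIntegral.integral_mono_on_of_le_Ioo (by linarith) ?_
    (hβ.intervalIntegrable_of_nonneg (by linarith) (by linarith)) fun u hu => ?_
  · have := (hβ.intervalIntegrable_of_nonneg (x := t' - c') (y := t' - c) (by linarith)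
      (by linarith)).comp_add_right (t' - t)
    convert this using 1 <;> ring
  · have hu0 : 0 < u := by linarith [hu.1]
    exact hβanti (Set.mem_Ioi.2 hu0) (Set.mem_Ioi.2 (by linarith)) (by linarith)

end Kernel

section MemoryWeight

variable {β : ℝ → ℝ} {tp : ℕ → ℝ} {N : ℕ}

noncomputable def memoryWeight (β : ℝ → ℝ) (tp : ℕ → ℝ) (n j : ℕ) : ℝ :=
  ⨍ t in tp (n - 1)..tp n, (kernelPrimitive β (t - tp (j - 1)) - kernelPrimitive β (t - tp j))

theorem intervalIntegrable_kernelPrimitive_comp_sub (hβ : IntegrableOn β (Set.Ioi 0))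
    (hβ0 : ∀ s ∈ Set.Ioi (0 : ℝ), 0 ≤ β s) (c a b : ℝ) :
    IntervalIntegrable (fun t => kernelPrimitive β (t - c)) volume a b :=
  ((monotone_kernelPrimitive hβ hβ0).comp fun _ _ h => sub_le_sub_right h c).intervalIntegrable

theorem qweight_eq_kstep_mul_memoryWeight (hβ : IntegrableOn β (Set.Ioi 0))
    (htp : StrictMonoOn tp (Set.Iic N)) {n j : ℕ} (hj : 1 ≤ j) (hjn : j ≤ n) (hn : n ≤ N) :
    qweight β tp n j = kstep tp n * memoryWeight β tp n j := by
  have hlt : tp (n - 1) < tp n := htp.Iic_apply_lt (by omega) hn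
  rw [memoryWeight, interval_average_eq, smul_eq_mul, ← mul_assoc, kstep,
    mul_inv_cancel₀ (sub_pos.2 hlt).ne', one_mul, qweight]
  refine intervalIntegral.integral_congr fun t ht => ?_
  rw [Set.uIcc_of_le hlt.le] at ht
  exact integral_kernel_eq hβ (htp.Iic_apply_le (by omega) (by omega))
    ((htp.Iic_apply_le (by omega) (by omega)).trans ht.1)

theorem sum_memoryWeight (hβ : IntegrableOn β (Set.Ioi 0))
    (hβ0 : ∀ s ∈ Set.Ioi (0 : ℝ), 0 ≤ β s) (htp : StrictMonoOn tp (Set.Iic N)) (htp0 : tp 0 = 0)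
    {n : ℕ} (hn : n ≤ N) :
    ∑ j ∈ Icc 1 n, memoryWeight β tp n j = ⨍ t in tp (n - 1)..tp n, kernelPrimitive β t := by
  simp only [memoryWeight, interval_average_eq]
  rw [← Finset.smul_sum, ← intervalIntegral.integral_finsetSum fun j _ =>
    (intervalIntegrable_kernelPrimitive_comp_sub hβ hβ0 _ _ _).sub
      (intervalIntegrable_kernelPrimitive_comp_sub hβ hβ0 _ _ _)]
  congr 1
  refine intervalIntegral.integral_congr fun t ht => ?_
  rw [Set.uIcc_of_le (htp.Iic_apply_le (Nat.sub_le n 1) hn)] at ht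
  rw [Finset.sum_Icc_pred_sub (fun j => kernelPrimitive β (t - tp j)), htp0, sub_zero,
    kernelPrimitive_of_nonpos (sub_nonpos.2 ht.2), sub_zero]

theorem memoryWeight_nonneg (hβ : IntegrableOn β (Set.Ioi 0))
    (hβ0 : ∀ s ∈ Set.Ioi (0 : ℝ), 0 ≤ β s) (htp : StrictMonoOn tp (Set.Iic N)) {n j : ℕ}
    (hj : 1 ≤ j) (hjn : j ≤ n) (hn : n ≤ N) : 0 ≤ memoryWeight β tp n j :=
  le_intervalAverage_of_forall_le (htp.Iic_apply_lt (by omega) hn)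
    ((intervalIntegrable_kernelPrimitive_comp_sub hβ hβ0 _ _ _).sub
      (intervalIntegrable_kernelPrimitive_comp_sub hβ hβ0 _ _ _))
    fun t _ => sub_nonneg.2 (monotone_kernelPrimitive hβ hβ0
      (sub_le_sub_left (htp.Iic_apply_le (by omega) (by omega)) t))

theorem sum_memoryWeight_le (hβ : IntegrableOn β (Set.Ioi 0))
    (hβ0 : ∀ s ∈ Set.Ioi (0 : ℝ), 0 ≤ β s) (htp : StrictMonoOn tp (Set.Iic N)) (htp0 : tp 0 = 0)
    {n : ℕ} (hn : n ≤ N) : ∑ j ∈ Icc 1 n, memoryWeight β tp n j ≤ ∫ s in Set.Ioi 0, β s := by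
  rcases n with _ | n
  · simpa using setIntegral_nonneg measurableSet_Ioi hβ0
  rw [sum_memoryWeight hβ hβ0 htp htp0 hn]
  exact intervalAverage_le_of_forall_le (htp.Iic_apply_lt (by omega) hn)
    (monotone_kernelPrimitive hβ hβ0).intervalIntegrable fun t _ => kernelPrimitive_le hβ hβ0 t

theorem sum_memoryWeight_le_sum_succ (hβ : IntegrableOn β (Set.Ioi 0))
    (hβ0 : ∀ s ∈ Set.Ioi (0 : ℝ), 0 ≤ β s) (htp : StrictMonoOn tp (Set.Iic N)) (htp0 : tp 0 = 0)
    {n : ℕ} (hn : n < N) :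
    ∑ j ∈ Icc 1 n, memoryWeight β tp n j ≤ ∑ j ∈ Icc 1 (n + 1), memoryWeight β tp (n + 1) j := by
  rcases n with _ | n
  · rw [Finset.Icc_eq_empty_of_lt zero_lt_one, Finset.sum_empty]
    exact Finset.sum_nonneg fun j hj => memoryWeight_nonneg hβ hβ0 htp
      (Finset.mem_Icc.1 hj).1 (Finset.mem_Icc.1 hj).2 hn
  rw [sum_memoryWeight hβ hβ0 htp htp0 hn.le, sum_memoryWeight hβ hβ0 htp htp0 hn]
  exact ((monotone_kernelPrimitive hβ hβ0).monotoneOn _).intervalAverage_le_intervalAverage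
    (htp.Iic_apply_lt (by omega) (by omega)) (htp.Iic_apply_lt (by omega) hn)

theorem memoryWeight_succ_le (hβ : IntegrableOn β (Set.Ioi 0)) (hβanti : AntitoneOn β (Set.Ioi 0))
    (htp : StrictMonoOn tp (Set.Iic N)) {n j : ℕ} (hj : 1 ≤ j) (hjn : j < n) (hn : n < N) :
    memoryWeight β tp (n + 1) j ≤ memoryWeight β tp n j := by
  have hsub : Set.Icc (tp (n - 1)) (tp (n + 1)) ⊆ Set.Ici (tp j) := fun t ht =>
    (htp.Iic_apply_le (by omega) (by omega)).trans ht.1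
  rw [memoryWeight, memoryWeight, Nat.add_sub_cancel]
  exact ((antitoneOn_kernelPrimitive_sub hβ hβanti (htp.Iic_apply_le (by omega) (by omega))).mono
    hsub).intervalAverage_le_intervalAverage (htp.Iic_apply_lt (by omega) (by omega))
    (htp.Iic_apply_lt (by omega) hn)

theorem admissibleWeights_memoryWeight (hβ : IntegrableOn β (Set.Ioi 0))
    (hβ0 : ∀ s ∈ Set.Ioi (0 : ℝ), 0 ≤ β s) (hβanti : AntitoneOn β (Set.Ioi 0))
    (htp : StrictMonoOn tp (Set.Iic N)) (htp0 : tp 0 = 0) :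
    AdmissibleWeights N (∫ s in Set.Ioi 0, β s) (memoryWeight β tp) where
  nonneg _ _ hj hjn hn := memoryWeight_nonneg hβ hβ0 htp hj hjn hn
  sum_le _ hn := sum_memoryWeight_le hβ hβ0 htp htp0 hn
  sum_le_sum_succ _ hn := sum_memoryWeight_le_sum_succ hβ hβ0 htp htp0 hn
  succ_le _ _ hj hjn hn := memoryWeight_succ_le hβ hβanti htp hj hjn hn

end MemoryWeight

theorem kstep_smul_iavg {E : Type*} [NormedAddCommGroup E] [NormedSpace ℝ E] {tp : ℕ → ℝ}
    {n : ℕ} (h : kstep tp n ≠ 0) (f : ℝ → E) :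
    kstep tp n • iavg tp f n = ∫ t in tp (n - 1)..tp n, f t := by
  rw [iavg, smul_smul, mul_inv_cancel₀ h, one_smul]

theorem sum_norm_map_integral_le {E F : Type*} [NormedAddCommGroup E] [NormedSpace ℝ E]
    [CompleteSpace E] [NormedAddCommGroup F] [NormedSpace ℝ F] [CompleteSpace F]
    (L : E →L[ℝ] F) {tp : ℕ → ℝ} {N : ℕ} (htp : MonotoneOn tp (Set.Iic N)) {f : ℝ → E}
    (hf : IntegrableOn f (Set.Icc (tp 0) (tp N))) :
    ∑ n ∈ Icc 1 N, ‖L (∫ t in tp (n - 1)..tp n, f t)‖ ≤ ∫ t in tp 0..tp N, ‖L (f t)‖ := by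
  induction N with
  | zero => simp
  | succ N ih =>
    have hle : tp N ≤ tp (N + 1) := htp (by simp) (by simp) (by omega)
    have h0 : tp 0 ≤ tp N := htp (by simp) (by simp) (by omega)
    have hfN : IntegrableOn f (Set.Icc (tp 0) (tp N)) := hf.mono_set (Set.Icc_subset_Icc_right hle)
    have hfN' : IntegrableOn f (Set.Icc (tp N) (tp (N + 1))) :=
      hf.mono_set (Set.Icc_subset_Icc_left h0)
    have hfI : IntervalIntegrable f volume (tp N) (tp (N + 1)) :=
      (intervalIntegrable_iff_integrableOn_Icc_of_le hle).2 hfN'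
    calc ∑ n ∈ Icc 1 (N + 1), ‖L (∫ t in tp (n - 1)..tp n, f t)‖
        = ∑ n ∈ Icc 1 N, ‖L (∫ t in tp (n - 1)..tp n, f t)‖
          + ‖∫ t in tp N..tp (N + 1), L (f t)‖ := by
          rw [Finset.sum_Icc_succ_top (by omega), Nat.add_sub_cancel,
            L.intervalIntegral_comp_comm hfI]
      _ ≤ (∫ t in tp 0..tp N, ‖L (f t)‖) + ∫ t in tp N..tp (N + 1), ‖L (f t)‖ :=
          add_le_add (ih (htp.mono (Set.Iic_subset_Iic.2 (by omega))) hfN)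
            (intervalIntegral.norm_integral_le_integral_norm hle)
      _ = ∫ t in tp 0..tp (N + 1), ‖L (f t)‖ :=
          intervalIntegral.integral_add_adjacent_intervals
            ((intervalIntegrable_iff_integrableOn_Icc_of_le h0).2 (L.integrable_comp hfN).norm)
            ((intervalIntegrable_iff_integrableOn_Icc_of_le hle).2 (L.integrable_comp hfN').norm)

theorem sum_norm_data_le_integral {E F : Type*} [NormedAddCommGroup E] [NormedSpace ℝ E]
    [CompleteSpace E] [NormedAddCommGroup F] [NormedSpace ℝ F] [CompleteSpace F]
    (L : E →L[ℝ] F) {tp : ℕ → ℝ} {N : ℕ} (htp : StrictMonoOn tp (Set.Iic N)) {f : ℝ → E}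
    {g : ℝ → F} (hf : IntegrableOn f (Set.Icc (tp 0) (tp N)))
    (hg : IntegrableOn g (Set.Icc (tp 0) (tp N))) :
    ∑ n ∈ Icc 1 N, (‖L (kstep tp n • iavg tp f n)‖ + ‖kstep tp n • iavg tp g n‖)
      ≤ ∫ t in tp 0..tp N, (‖L (f t)‖ + ‖g t‖) := by
  have h0N : tp 0 ≤ tp N := htp.Iic_apply_le N.zero_le le_rfl
  have hk : ∀ n ∈ Icc 1 N, kstep tp n ≠ 0 := by
    intro n hn
    obtain ⟨hn1, hnN⟩ := Finset.mem_Icc.1 hn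
    exact (sub_pos.2 (htp.Iic_apply_lt (by omega) hnN)).ne'
  rw [intervalIntegral.integral_add
      ((intervalIntegrable_iff_integrableOn_Icc_of_le h0N).2 (L.integrable_comp hf).norm)
      ((intervalIntegrable_iff_integrableOn_Icc_of_le h0N).2 hg.norm), Finset.sum_add_distrib]
  gcongr
  · refine le_of_eq_of_le (Finset.sum_congr rfl fun n hn => ?_)
      (sum_norm_map_integral_le L htp.monotoneOn hf)
    rw [kstep_smul_iavg (hk n hn)]
  · refine le_of_eq_of_le (Finset.sum_congr rfl fun n hn => ?_)
      (sum_norm_map_integral_le (.id ℝ F) htp.monotoneOn hg)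
    rw [kstep_smul_iavg (hk n hn), ContinuousLinearMap.id_apply]

theorem dG0_stability.{u} (γ ρ : ℝ) (hγ0 : 0 < γ) (hγ1 : γ < 1) (hρ : 0 < ρ) :
    ∃ C : ℝ, 0 < C ∧
      ∀ (H : Type u) [NormedAddCommGroup H] [InnerProductSpace ℝ H] [CompleteSpace H],
      ∀ (N : ℕ), 1 ≤ N → ∀ (tp : ℕ → ℝ), tp 0 = 0 → (∀ n < N, tp n < tp (n + 1)) →
      ∀ (β : ℝ → ℝ), (∀ s ∈ Set.Ioi (0:ℝ), 0 ≤ β s) → AntitoneOn β (Set.Ioi 0) →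
        LocallyIntegrableOn β (Set.Ioi 0) → (∫ s in Set.Ioi (0:ℝ), β s) = γ →
      ∀ (A sqrtA : H →L[ℝ] H),
        (∀ x y : H, ⟪A x, y⟫ = ⟪x, A y⟫) →
        (∃ c > 0, ∀ x : H, c * ‖x‖ ^ 2 ≤ ⟪A x, x⟫) →
        (∀ x y : H, ⟪sqrtA x, y⟫ = ⟪x, sqrtA y⟫) →
        (∀ x : H, 0 ≤ ⟪sqrtA x, x⟫) →
        (∀ x : H, sqrtA (sqrtA x) = A x) →
      ∀ (u0 v0 : H) (f1 f2 : ℝ → H),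
        IntegrableOn f1 (Set.Icc 0 (tp N)) → IntegrableOn f2 (Set.Icc 0 (tp N)) →
      ∀ (U1 U2 : ℕ → H), U1 0 = u0 → U2 0 = v0 →
        (∀ n : ℕ, 1 ≤ n → n ≤ N →
          U1 n - U1 (n - 1) = kstep tp n • U2 n + kstep tp n • iavg tp f1 n) →
        (∀ n : ℕ, 1 ≤ n → n ≤ N →
          ρ • (U2 n - U2 (n - 1)) + (kstep tp n - qweight β tp n n) • A (U1 n)
              - ∑ j ∈ Finset.Ico 1 n, qweight β tp n j • A (U1 j)
            = kstep tp n • iavg tp f2 n) →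
      ‖sqrtA (U1 N)‖ + ‖U2 N‖
        ≤ C * (‖sqrtA u0‖ + ‖v0‖
            + ∫ t in (0:ℝ)..(tp N), (‖sqrtA (f1 t)‖ + ‖f2 t‖)) := by
  refine ⟨stabilityConstant ρ γ, stabilityConstant_pos hρ hγ1, ?_⟩
  intro H _ _ _ N _ tp htp0 htp β hβ0 hβanti _ hβγ A sqrtA _ _ hS _ hSS u0 v0 f1 f2 hf1 hf2
    U1 U2 hU1 hU2 heq1 heq2
  subst hU1 hU2
  have hmono : StrictMonoOn tp (Set.Iic N) := strictMonoOn_Iic_of_lt_succ htp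
  -- The Bochner integral of a non-integrable function is `0`, and `γ ≠ 0`.
  have hβ : IntegrableOn β (Set.Ioi 0) := by
    by_contra h
    rw [integral_undef h] at hβγ
    linarith
  have hw := hβγ ▸ admissibleWeights_memoryWeight hβ hβ0 hβanti hmono htp0
  rw [← htp0] at hf1 hf2 ⊢
  calc ‖sqrtA (U1 N)‖ + ‖U2 N‖
      ≤ stabilityConstant ρ γ * (‖sqrtA (U1 0)‖ + ‖U2 0‖
          + ∑ n ∈ Icc 1 N, (‖sqrtA (kstep tp n • iavg tp f1 n)‖ + ‖kstep tp n • iavg tp f2 n‖)) :=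
        norm_add_norm_le_of_energy_identity hρ hγ1 hw fun n h1 h2 =>
          energy_identity_of_dG0_step hS hSS h1
            (fun j hj => qweight_eq_kstep_mul_memoryWeight hβ hmono (Finset.mem_Icc.1 hj).1
              (Finset.mem_Icc.1 hj).2 h2) (heq1 n h1 h2) (heq2 n h1 h2)
    _ ≤ _ := by
      gcongr
      · exact (stabilityConstant_pos hρ hγ1).le
      · exact sum_norm_data_le_integral sqrtA hmono hf1 hf2
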